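/- Let λ ∈ ℂ with |λ| = 1, and let K, K' be positive definite maps on ℤ² satisfying K((m+1,n),(m'+1,n')) = K((m,n),(m',n')) and K((m,n+1),(m',n'+1)) = λ^{m-m'} K((m,n),(m',n')) for all m,n,m',n' ∈ ℤ (and likewise for K'), with K' ≤ cK for some c > 0. Let (H_K, U_K, V_K, ξ₀) be the Gabor type cyclic system associated to K. Then there is a unique positive bounded operator S on H_K commuting with U_K and V_K such that ⟨S U_K^m V_K^n ξ₀, U_K^{m'} V_K^{n'} ξ₀⟩ = K'((m,n),(m',n')) for all m,n,m',n' ∈ ℤ. Conversely, if S is a positive bounded operator on H_K commuting with U_K and V_K, then K' defined by K'((m,n),(m',n')) = ⟨S U_K^m V_K^n ξ₀, U_K^{m'} V_K^{n'} ξ₀⟩ is positive definite and satisfies the two covariance relations above. -/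

import Mathlib

open scoped InnerProductSpace ComplexOrder Classical
open Complex

noncomputable section

/-- A kernel `K : X × X → ℂ` is positive definite if every finite quadratic form
`∑ i j, K (x i) (x j) * ξ i * conj (ξ j)` is a nonnegative real number
(expressed via the partial order on `ℂ`). -/
def IsPosDefKernel {X : Type*} (K : X → X → ℂ) : Prop :=
  ∀ (n : ℕ) (x : Fin n → X) (ξ : Fin n → ℂ),
    0 ≤ ∑ i, ∑ j, K (x i) (x j) * ξ i * (starRingEnd ℂ) (ξ j)

/-- `(H, v)` is a Kolmogorov representation of the kernel `K`: the span of the range of `v`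
is dense and inner products of the `v x` reproduce `K`.  Mathlib's inner product is
conjugate-linear in the first variable, while the paper's is conjugate-linear in the second,
so the paper's `⟨v x, v y⟩ = K x y` reads `⟪v y, v x⟫_ℂ = K x y` here. -/
def IsKolmogorovRep {X : Type*} (K : X → X → ℂ) (H : Type*) [NormedAddCommGroup H]
    [InnerProductSpace ℂ H] (v : X → H) : Prop :=
  Dense (↑(Submodule.span ℂ (Set.range v)) : Set H) ∧
    ∀ x y : X, ⟪v y, v x⟫_ℂ = K x y

/-- `L² ≤ c K K'` in the sense of Dutkay. -/
def KernelSqLE {X : Type*} (L K K' : X → X → ℂ) (c : ℝ) : Prop :=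
  ∀ (m n : ℕ) (x : Fin m → X) (y : Fin n → X) (ξ : Fin m → ℂ) (η : Fin n → ℂ),
    ‖∑ i, ∑ j, L (x i) (y j) * ξ i * (starRingEnd ℂ) (η j)‖ ^ 2 ≤
      c * (∑ i, ∑ i', K (x i) (x i') * ξ i * (starRingEnd ℂ) (ξ i')).re *
        (∑ j, ∑ j', K' (y j) (y j') * η j * (starRingEnd ℂ) (η j')).re

/-- `K' ≤ c K` for kernels, via the partial order on `ℂ`. -/
def KernelLE {X : Type*} (K' K : X → X → ℂ) (c : ℝ) : Prop :=
  ∀ (n : ℕ) (x : Fin n → X) (ξ : Fin n → ℂ),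
    ∑ i, ∑ j, K' (x i) (x j) * ξ i * (starRingEnd ℂ) (ξ j) ≤
      (c : ℂ) * ∑ i, ∑ j, K (x i) (x j) * ξ i * (starRingEnd ℂ) (ξ j)

/-- A bounded operator is positive if `⟨S v, v⟩ ≥ 0` for all `v` (paper convention;
in Mathlib's convention this is `0 ≤ ⟪v, S v⟫`). -/
def IsPositiveOp {H : Type*} [NormedAddCommGroup H] [InnerProductSpace ℂ H]
    (S : H →L[ℂ] H) : Prop :=
  ∀ v : H, 0 ≤ ⟪v, S v⟫_ℂ

/-- A family of vectors is a normalized tight frame. -/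
def IsNormalizedTightFrame {H : Type*} [NormedAddCommGroup H] [InnerProductSpace ℂ H]
    {ι : Type*} (v : ι → H) : Prop :=
  ∀ f : H, ∑' i, ‖⟪v i, f⟫_ℂ‖ ^ 2 = ‖f‖ ^ 2

/-- `P` is the orthogonal projection onto the set `S`: idempotent, self-adjoint,
with range `S`. -/
def IsOrthProjectionOnto {H : Type*} [NormedAddCommGroup H] [InnerProductSpace ℂ H]
    (P : H →L[ℂ] H) (S : Set H) : Prop :=
  (∀ v, P (P v) = P v) ∧ (∀ v w : H, ⟪P v, w⟫_ℂ = ⟪v, P w⟫_ℂ) ∧ Set.range P = S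

/-- The two covariance relations for a Gabor-type kernel on `ℤ²`. -/
def GaborCovariant (lam : ℂ) (K : ℤ × ℤ → ℤ × ℤ → ℂ) : Prop :=
  (∀ m n m' n' : ℤ, K (m + 1, n) (m' + 1, n') = K (m, n) (m', n')) ∧
  (∀ m n m' n' : ℤ, K (m, n + 1) (m', n' + 1) = lam ^ (m - m') * K (m, n) (m', n'))

/-- The vectors `U^m V^n ξ₀` of a Gabor type unitary system. -/
def gaborVec {H : Type*} [NormedAddCommGroup H] [InnerProductSpace ℂ H] [CompleteSpace H]
    (U V : unitary (H →L[ℂ] H)) (ξ₀ : H) (p : ℤ × ℤ) : H :=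
  ((U ^ p.1 * V ^ p.2 : unitary (H →L[ℂ] H)) : H →L[ℂ] H) ξ₀

/-- `(H, U, V, ξ₀)` is the Gabor type cyclic system associated to the kernel `K` and the
unimodular scalar `lam` : `U V = lam V U`, the vectors `U^m V^n ξ₀` span a dense subspace,
and their inner products reproduce `K`. -/
def IsGaborSystem {H : Type*} [NormedAddCommGroup H] [InnerProductSpace ℂ H] [CompleteSpace H]
    (lam : ℂ) (K : ℤ × ℤ → ℤ × ℤ → ℂ) (U V : unitary (H →L[ℂ] H)) (ξ₀ : H) : Prop :=
  ((U : H →L[ℂ] H) * (V : H →L[ℂ] H) = lam • ((V : H →L[ℂ] H) * (U : H →L[ℂ] H))) ∧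
  Dense (↑(Submodule.span ℂ (Set.range (gaborVec U V ξ₀))) : Set H) ∧
  ∀ m n m' n' : ℤ,
    ⟪gaborVec U V ξ₀ (m', n'), gaborVec U V ξ₀ (m, n)⟫_ℂ = K (m, n) (m', n')

/-!
The finitely supported functions `ξ` on `ℤ²` carry the semi-inner product defined by `K'`. By
Cauchy–Schwarz and `K' ≤ c K` it is bounded by `c ‖∑ ξ p • e p‖ ‖∑ η q • e q‖`, where
`e (m, n) = U^m V^n ξ₀`; as the `e p` span a dense subspace, it extends to a bounded sesquilinear
form on `H`, represented by a positive operator `S` with matrix coefficients `K'`. An operator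
commutes with a unitary `W` iff its matrix coefficients are invariant under `W`, and since
`U e (m, n) = e (m + 1, n)` and `V e (m, n) = λ^(-m) e (m, n + 1)`, invariance under `U` and `V`
is exactly the pair of covariance relations.
-/

open scoped ComplexConjugate

section Kernel

variable {X : Type*}

theorem Finset.sum_sum_equivFin_symm {β : Type*} [AddCommMonoid β] (s : Finset X)
    (F : X → X → β) :
    ∑ i, ∑ j, F (s.equivFin.symm i) (s.equivFin.symm j) = ∑ p ∈ s, ∑ q ∈ s, F p q := by
  rw [← Finset.sum_coe_sort s, ← s.equivFin.symm.sum_comp]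
  refine Finset.sum_congr rfl fun i _ => ?_
  rw [← Finset.sum_coe_sort s, ← s.equivFin.symm.sum_comp]

theorem IsPosDefKernel.conj_apply {L : X → X → ℂ} (hL : IsPosDefKernel L) (p q : X) :
    conj (L p q) = L q p := by
  -- the forms at `![1, 1]` and `![1, I]` are real, so `L p q + L q p` is real and
  -- `L p q - L q p` is purely imaginary
  have h₁ := (Complex.le_def.1 (hL 1 ![p] ![1])).2
  have h₂ := (Complex.le_def.1 (hL 1 ![q] ![1])).2
  have h₃ := (Complex.le_def.1 (hL 2 ![p, q] ![1, 1])).2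
  have h₄ := (Complex.le_def.1 (hL 2 ![p, q] ![1, Complex.I])).2
  simp [Fin.sum_univ_two] at h₁ h₂ h₃ h₄
  apply Complex.ext <;> simp only [Complex.conj_re, Complex.conj_im] <;> linarith

theorem IsPosDefKernel.sum_finset_nonneg {L : X → X → ℂ} (hL : IsPosDefKernel L) (s : Finset X)
    (f : X → ℂ) : 0 ≤ ∑ p ∈ s, ∑ q ∈ s, L p q * f p * conj (f q) := by
  rw [← s.sum_sum_equivFin_symm]
  exact hL s.card _ _

theorem KernelLE.sum_finset_le {K' K : X → X → ℂ} {c : ℝ} (h : KernelLE K' K c) (s : Finset X)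
    (f : X → ℂ) : ∑ p ∈ s, ∑ q ∈ s, K' p q * f p * conj (f q) ≤
      c * ∑ p ∈ s, ∑ q ∈ s, K p q * f p * conj (f q) := by
  rw [← s.sum_sum_equivFin_symm, ← s.sum_sum_equivFin_symm]
  exact h s.card _ _

def kernelForm (L : X → X → ℂ) : (X →₀ ℂ) →ₗ⋆[ℂ] (X →₀ ℂ) →ₗ[ℂ] ℂ :=
  LinearMap.mk₂'ₛₗ (starRingEnd ℂ) (RingHom.id ℂ)
    (fun η ξ => ξ.sum fun p a => η.sum fun q b => L p q * a * conj b)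
    (fun η η' ξ => by simp [Finsupp.sum_add_index', mul_add, Finsupp.sum_add])
    (fun r η ξ => by
      simp only [map_zero, mul_zero, implies_true, Finsupp.sum_smul_index', smul_eq_mul, map_mul,
        Finsupp.mul_sum]
      exact Finsupp.sum_congr fun p _ => Finsupp.sum_congr fun q _ => by ring)
    (fun η ξ ξ' => by
      rw [Finsupp.sum_add_index' (by simp) (by simp [mul_add, add_mul, Finsupp.sum_add])])
    (fun r η ξ => by
      rw [Finsupp.sum_smul_index' (by simp)]
      simp only [smul_eq_mul, RingHom.id_apply, Finsupp.mul_sum]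
      exact Finsupp.sum_congr fun p _ => Finsupp.sum_congr fun q _ => by ring)

theorem kernelForm_apply (L : X → X → ℂ) (η ξ : X →₀ ℂ) :
    kernelForm L η ξ = ξ.sum fun p a => η.sum fun q b => L p q * a * conj b := rfl

theorem kernelForm_single (L : X → X → ℂ) (p q : X) :
    kernelForm L (Finsupp.single q 1) (Finsupp.single p 1) = L p q := by
  simp [kernelForm_apply]

theorem IsPosDefKernel.kernelForm_self_nonneg {L : X → X → ℂ} (hL : IsPosDefKernel L)
    (ξ : X →₀ ℂ) : 0 ≤ kernelForm L ξ ξ :=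
  hL.sum_finset_nonneg ξ.support ξ

theorem KernelLE.kernelForm_self_le {K' K : X → X → ℂ} {c : ℝ} (h : KernelLE K' K c)
    (ξ : X →₀ ℂ) : kernelForm K' ξ ξ ≤ c * kernelForm K ξ ξ :=
  h.sum_finset_le ξ.support ξ

theorem IsPosDefKernel.conj_kernelForm {L : X → X → ℂ} (hL : IsPosDefKernel L) (η ξ : X →₀ ℂ) :
    conj (kernelForm L η ξ) = kernelForm L ξ η := by
  simp only [kernelForm_apply, Finsupp.sum, map_sum, map_mul, IsPosDefKernel.conj_apply hL,
    Complex.conj_conj]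
  rw [Finset.sum_comm]
  exact Finset.sum_congr rfl fun _ _ => Finset.sum_congr rfl fun _ _ => by ring

theorem IsPosDefKernel.norm_kernelForm_sq_le {L : X → X → ℂ} (hL : IsPosDefKernel L)
    (η ξ : X →₀ ℂ) :
    ‖kernelForm L η ξ‖ ^ 2 ≤ (kernelForm L η η).re * (kernelForm L ξ ξ).re := by
  let core : PreInnerProductSpace.Core ℂ (X →₀ ℂ) :=
    { inner := fun η ξ => kernelForm L η ξ
      conj_inner_symm := fun η ξ => hL.conj_kernelForm ξ η
      re_inner_nonneg := fun ξ => (Complex.le_def.1 (hL.kernelForm_self_nonneg ξ)).1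
      add_left := fun η η' ξ => by simp
      smul_left := fun η ξ r => by simp }
  have h := InnerProductSpace.Core.inner_mul_inner_self_le (c := core) η ξ
  change ‖kernelForm L η ξ‖ * ‖kernelForm L ξ η‖ ≤ _ at h
  rwa [← hL.conj_kernelForm η ξ, Complex.norm_conj, ← sq] at h

end Kernel

section Hilbert

variable {X H : Type*} [NormedAddCommGroup H] [InnerProductSpace ℂ H]

theorem inner_linearCombination_linearCombination (e : X → H) (η ξ : X →₀ ℂ) :
    ⟪Finsupp.linearCombination ℂ e η, Finsupp.linearCombination ℂ e ξ⟫_ℂ =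
      kernelForm (fun p q => ⟪e q, e p⟫_ℂ) η ξ := by
  simp only [Finsupp.linearCombination_apply, Finsupp.inner_sum, Finsupp.sum_inner,
    inner_smul_left, inner_smul_right, kernelForm_apply, Finsupp.mul_sum]
  exact Finsupp.sum_congr fun p _ => Finsupp.sum_congr fun q _ => by ring

theorem IsKolmogorovRep.norm_kernelForm_le {K K' : X → X → ℂ} {e : X → H}
    (he : IsKolmogorovRep K H e) (hK' : IsPosDefKernel K') {c : ℝ} (hc : 0 ≤ c)
    (hle : KernelLE K' K c) (η ξ : X →₀ ℂ) :
    ‖kernelForm K' η ξ‖ ≤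
      c * ‖Finsupp.linearCombination ℂ e η‖ * ‖Finsupp.linearCombination ℂ e ξ‖ := by
  have hK : (fun p q => ⟪e q, e p⟫_ℂ) = K := funext₂ he.2
  have hdiag : ∀ ζ, (kernelForm K' ζ ζ).re ≤ c * ‖Finsupp.linearCombination ℂ e ζ‖ ^ 2 := by
    intro ζ
    have h := (Complex.le_def.1 (hle.kernelForm_self_le ζ)).1
    rw [Complex.re_ofReal_mul, ← hK, ← inner_linearCombination_linearCombination] at h
    rwa [← inner_self_eq_norm_sq (𝕜 := ℂ)]
  have hη := (Complex.le_def.1 (hK'.kernelForm_self_nonneg η)).1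
  have hξ := (Complex.le_def.1 (hK'.kernelForm_self_nonneg ξ)).1
  refine le_of_sq_le_sq ?_ (by positivity)
  calc ‖kernelForm K' η ξ‖ ^ 2 ≤ (kernelForm K' η η).re * (kernelForm K' ξ ξ).re :=
        hK'.norm_kernelForm_sq_le η ξ
    _ ≤ (c * ‖Finsupp.linearCombination ℂ e η‖ ^ 2) *
          (c * ‖Finsupp.linearCombination ℂ e ξ‖ ^ 2) :=
        mul_le_mul (hdiag η) (hdiag ξ) hξ (hη.trans (hdiag η))
    _ = _ := by ring

theorem isPositiveOp_of_denseRange {f : X → H} (hf : DenseRange f) {S : H →L[ℂ] H}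
    (hS : ∀ x, 0 ≤ ⟪f x, S (f x)⟫_ℂ) : IsPositiveOp S := fun v =>
  hf.induction_on v (isClosed_le continuous_const (by fun_prop)) hS

theorem IsPositiveOp.isPosDefKernel {S : H →L[ℂ] H} (hS : IsPositiveOp S) (e : X → H) :
    IsPosDefKernel fun p q => ⟪e q, S (e p)⟫_ℂ := fun n x ξ => by
  convert hS (∑ i, ξ i • e (x i)) using 1
  simp only [map_sum, map_smul, sum_inner, inner_sum, inner_smul_left, inner_smul_right,
    Finset.mul_sum]
  exact Finset.sum_congr rfl fun i _ => Finset.sum_congr rfl fun j _ => by ring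

theorem ContinuousLinearMap.ext_inner_apply_of_dense {e : X → H}
    (he : Dense (Submodule.span ℂ (Set.range e) : Set H)) {S T : H →L[ℂ] H}
    (h : ∀ p q, ⟪e q, S (e p)⟫_ℂ = ⟪e q, T (e p)⟫_ℂ) : S = T := by
  refine ContinuousLinearMap.ext_on he ?_
  rintro _ ⟨p, rfl⟩
  have : innerSLFlip ℂ (S (e p)) = innerSLFlip ℂ (T (e p)) :=
    ContinuousLinearMap.ext_on he (by rintro _ ⟨q, rfl⟩; exact h p q)
  exact ext_inner_left ℂ fun v => congr($this v)

end Hilbert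

section Complete

variable {X V H : Type*} [NormedAddCommGroup H] [InnerProductSpace ℂ H] [CompleteSpace H]

theorem exists_inner_apply_eq_of_norm_le [AddCommGroup V] [Module ℂ V] {Φ : V →ₗ[ℂ] H}
    (hΦ : DenseRange Φ) (B : V →ₗ⋆[ℂ] V →ₗ[ℂ] ℂ) {C : ℝ} (hC : 0 ≤ C)
    (hB : ∀ η ξ, ‖B η ξ‖ ≤ C * ‖Φ η‖ * ‖Φ ξ‖) :
    ∃ S : H →L[ℂ] H, ∀ η ξ, ⟪Φ η, S (Φ ξ)⟫_ℂ = B η ξ := by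
  have hBη : ∀ η, ∃ C', ∀ ξ, ‖B η ξ‖ ≤ C' * ‖Φ ξ‖ := fun η => ⟨C * ‖Φ η‖, hB η⟩
  have hB₁Φ : ∀ η ξ, (B η).extendOfNorm Φ (Φ ξ) = B η ξ := fun η =>
    LinearMap.extendOfNorm_eq hΦ (hBη η)
  let B₁ : V →ₗ⋆[ℂ] H →L[ℂ] ℂ :=
    { toFun := fun η => (B η).extendOfNorm Φ
      map_add' := fun η η' => LinearMap.extendOfNorm_unique hΦ _ (hB (η + η')) _ <| by
        ext ξ; simp [hB₁Φ]
      map_smul' := fun a η => LinearMap.extendOfNorm_unique hΦ _ (hB (a • η)) _ <| by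
        ext ξ; simp [hB₁Φ] }
  have hB₁ : ∀ η, ‖B₁ η‖ ≤ C * ‖Φ η‖ := fun η =>
    LinearMap.opNorm_extendOfNorm_le hΦ (by positivity) (hB η)
  have hB₂ : ∀ η ξ, B₁.extendOfNorm Φ (Φ η) (Φ ξ) = B η ξ := fun η ξ => by
    rw [LinearMap.extendOfNorm_eq hΦ ⟨C, hB₁⟩]
    exact hB₁Φ η ξ
  refine ⟨(InnerProductSpace.continuousLinearMapOfBilin (B₁.extendOfNorm Φ)).adjoint,
    fun η ξ => ?_⟩
  rw [ContinuousLinearMap.adjoint_inner_right,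
    InnerProductSpace.continuousLinearMapOfBilin_apply, hB₂]

theorem IsKolmogorovRep.exists_isPositiveOp_inner_eq {K K' : X → X → ℂ} {e : X → H}
    (he : IsKolmogorovRep K H e) (hK' : IsPosDefKernel K') {c : ℝ} (hc : 0 ≤ c)
    (hle : KernelLE K' K c) :
    ∃ S : H →L[ℂ] H, IsPositiveOp S ∧ ∀ p q, ⟪e q, S (e p)⟫_ℂ = K' p q := by
  have hΦ : DenseRange (Finsupp.linearCombination ℂ e) := by
    rw [DenseRange, ← LinearMap.coe_range, Finsupp.range_linearCombination]
    exact he.1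
  obtain ⟨S, hS⟩ :=
    exists_inner_apply_eq_of_norm_le hΦ (kernelForm K') hc (he.norm_kernelForm_le hK' hc hle)
  refine ⟨S, isPositiveOp_of_denseRange hΦ fun ξ => hS ξ ξ ▸ hK'.kernelForm_self_nonneg ξ,
    fun p q => ?_⟩
  simpa [kernelForm_single] using hS (Finsupp.single q 1) (Finsupp.single p 1)

theorem comp_eq_comp_iff_inner_map_map {e : X → H}
    (he : Dense (Submodule.span ℂ (Set.range e) : Set H)) (W : unitary (H →L[ℂ] H))
    (S : H →L[ℂ] H) :
    S.comp (W : H →L[ℂ] H) = (W : H →L[ℂ] H).comp S ↔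
      ∀ p q, ⟪(W : H →L[ℂ] H) (e q), S ((W : H →L[ℂ] H) (e p))⟫_ℂ = ⟪e q, S (e p)⟫_ℂ := by
  refine ⟨fun h p q => ?_, fun h => ?_⟩
  · rw [← ContinuousLinearMap.comp_apply, h, ContinuousLinearMap.comp_apply,
      Unitary.inner_map_map]
  · have hconj : star (W : H →L[ℂ] H) * S * W = S :=
      ContinuousLinearMap.ext_inner_apply_of_dense he fun p q => by
        simp [ContinuousLinearMap.star_eq_adjoint, ContinuousLinearMap.adjoint_inner_right, h]
    calc S.comp (W : H →L[ℂ] H) = W * (star (W : H →L[ℂ] H) * S * W) := by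
          rw [← mul_assoc, ← mul_assoc, Unitary.mul_star_self_of_mem W.prop, one_mul]; rfl
      _ = (W : H →L[ℂ] H).comp S := by rw [hconj]; rfl

end Complete

section Gabor

variable {H : Type*} [NormedAddCommGroup H] [InnerProductSpace ℂ H] [CompleteSpace H]

theorem gaborVec_fst_add_one (U V : unitary (H →L[ℂ] H)) (ξ₀ : H) (m n : ℤ) :
    gaborVec U V ξ₀ (m + 1, n) = (U : H →L[ℂ] H) (gaborVec U V ξ₀ (m, n)) := by
  simp [gaborVec, add_comm m 1, zpow_add, mul_assoc]

theorem gaborVec_snd_add_one {lam : ℂ} (hlam : lam ≠ 0) {U V : unitary (H →L[ℂ] H)}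
    (hUV : (U : H →L[ℂ] H) * (V : H →L[ℂ] H) = lam • ((V : H →L[ℂ] H) * (U : H →L[ℂ] H)))
    (ξ₀ : H) (m n : ℤ) :
    gaborVec U V ξ₀ (m, n + 1) = lam ^ m • (V : H →L[ℂ] H) (gaborVec U V ξ₀ (m, n)) := by
  have hUV' : ∀ x, (U : H →L[ℂ] H) ((V : H →L[ℂ] H) x) =
      lam • (V : H →L[ℂ] H) ((U : H →L[ℂ] H) x) := fun x => congr($hUV x)
  have hstep : ∀ m : ℤ,
      gaborVec U V ξ₀ (m, n + 1) = lam ^ m • (V : H →L[ℂ] H) (gaborVec U V ξ₀ (m, n)) ↔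
        gaborVec U V ξ₀ (m + 1, n + 1) =
          lam ^ (m + 1) • (V : H →L[ℂ] H) (gaborVec U V ξ₀ (m + 1, n)) := by
    intro m
    have hU : lam ^ (m + 1) • (V : H →L[ℂ] H) ((U : H →L[ℂ] H) (gaborVec U V ξ₀ (m, n))) =
        (U : H →L[ℂ] H) (lam ^ m • (V : H →L[ℂ] H) (gaborVec U V ξ₀ (m, n))) := by
      rw [map_smul, hUV', smul_smul, zpow_add_one₀ hlam]
    rw [gaborVec_fst_add_one, gaborVec_fst_add_one, hU]
    exact (Unitary.linearIsometryEquiv U).injective.eq_iff.symm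
  induction m using Int.induction_on with
  | zero => simp [gaborVec, add_comm n 1, zpow_add]
  | succ m ih => exact (hstep m).1 ih
  | pred m ih => exact (hstep _).2 (by rwa [sub_add_cancel])

theorem IsGaborSystem.gaborCovariant_iff {lam : ℂ} (hlam : ‖lam‖ = 1)
    {K : ℤ × ℤ → ℤ × ℤ → ℂ} {U V : unitary (H →L[ℂ] H)} {ξ₀ : H}
    (hsys : IsGaborSystem lam K U V ξ₀) (S : H →L[ℂ] H) :
    GaborCovariant lam (fun p q => ⟪gaborVec U V ξ₀ q, S (gaborVec U V ξ₀ p)⟫_ℂ) ↔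
      S.comp (U : H →L[ℂ] H) = (U : H →L[ℂ] H).comp S ∧
        S.comp (V : H →L[ℂ] H) = (V : H →L[ℂ] H).comp S := by
  obtain ⟨hUV, hdense, -⟩ := hsys
  have hlam0 : lam ≠ 0 := norm_ne_zero_iff.1 (hlam ▸ one_ne_zero)
  have hphase : ∀ m m' : ℤ, lam ^ m * conj (lam ^ m') = lam ^ (m - m') := fun m m' => by
    rw [map_zpow₀, ← Complex.inv_eq_conj hlam, inv_zpow', ← zpow_add₀ hlam0, sub_eq_add_neg]
  rw [comp_eq_comp_iff_inner_map_map hdense U, comp_eq_comp_iff_inner_map_map hdense V]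
  refine and_congr ?_ ?_
  · simp only [Prod.forall, gaborVec_fst_add_one]
  · simp only [Prod.forall, gaborVec_snd_add_one hlam0 hUV, map_smul, inner_smul_left,
      inner_smul_right, ← mul_assoc, hphase]
    exact forall₄_congr fun m n m' n' => mul_right_inj' (zpow_ne_zero _ hlam0)

end Gabor

theorem gabor_commutant_positive_operators_general (lam : ℂ) (hlam : ‖lam‖ = 1)
    (K : ℤ × ℤ → ℤ × ℤ → ℂ)
    {H : Type*} [NormedAddCommGroup H] [InnerProductSpace ℂ H] [CompleteSpace H]
    (U V : unitary (H →L[ℂ] H)) (ξ₀ : H) (hsys : IsGaborSystem lam K U V ξ₀) :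
    (∀ (K' : ℤ × ℤ → ℤ × ℤ → ℂ) (c : ℝ), 0 < c → IsPosDefKernel K' →
      GaborCovariant lam K' → KernelLE K' K c →
      ∃! S : H →L[ℂ] H,
        IsPositiveOp S ∧
        S.comp (U : H →L[ℂ] H) = (U : H →L[ℂ] H).comp S ∧
        S.comp (V : H →L[ℂ] H) = (V : H →L[ℂ] H).comp S ∧
        ∀ m n m' n' : ℤ,
          ⟪gaborVec U V ξ₀ (m', n'), S (gaborVec U V ξ₀ (m, n))⟫_ℂ = K' (m, n) (m', n')) ∧
    (∀ S : H →L[ℂ] H, IsPositiveOp S →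
      S.comp (U : H →L[ℂ] H) = (U : H →L[ℂ] H).comp S →
      S.comp (V : H →L[ℂ] H) = (V : H →L[ℂ] H).comp S →
      IsPosDefKernel (fun p q : ℤ × ℤ => ⟪gaborVec U V ξ₀ q, S (gaborVec U V ξ₀ p)⟫_ℂ) ∧
      GaborCovariant lam
        (fun p q : ℤ × ℤ => ⟪gaborVec U V ξ₀ q, S (gaborVec U V ξ₀ p)⟫_ℂ)) := by
  have hrep : IsKolmogorovRep K H (gaborVec U V ξ₀) :=
    ⟨hsys.2.1, fun p q => hsys.2.2 p.1 p.2 q.1 q.2⟩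
  refine ⟨fun K' c hc hK' hK'cov hle => ?_, fun S hS hSU hSV =>
    ⟨hS.isPosDefKernel _, (hsys.gaborCovariant_iff hlam S).2 ⟨hSU, hSV⟩⟩⟩
  obtain ⟨S, hS, hSK'⟩ := hrep.exists_isPositiveOp_inner_eq hK' hc.le hle
  have hcomm := (hsys.gaborCovariant_iff hlam S).1 (by rwa [show _ = K' from funext₂ hSK'])
  refine ⟨S, ⟨hS, hcomm.1, hcomm.2, fun m n m' n' => hSK' _ _⟩, fun T ⟨_, _, _, hTK'⟩ => ?_⟩
  exact ContinuousLinearMap.ext_inner_apply_of_dense hsys.2.1 fun p q => by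
    rw [hTK', hSK']

/-- Positive operators commuting with a Gabor type cyclic system correspond to covariant
positive definite kernels `K' ≤ c K`. -/
theorem gabor_commutant_positive_operators (lam : ℂ) (hlam : ‖lam‖ = 1)
    (K : ℤ × ℤ → ℤ × ℤ → ℂ) (hK : IsPosDefKernel K) (hKcov : GaborCovariant lam K)
    {H : Type*} [NormedAddCommGroup H] [InnerProductSpace ℂ H] [CompleteSpace H]
    (U V : unitary (H →L[ℂ] H)) (ξ₀ : H) (hsys : IsGaborSystem lam K U V ξ₀) :
    (∀ (K' : ℤ × ℤ → ℤ × ℤ → ℂ) (c : ℝ), 0 < c → IsPosDefKernel K' →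
      GaborCovariant lam K' → KernelLE K' K c →
      ∃! S : H →L[ℂ] H,
        IsPositiveOp S ∧
        S.comp (U : H →L[ℂ] H) = (U : H →L[ℂ] H).comp S ∧
        S.comp (V : H →L[ℂ] H) = (V : H →L[ℂ] H).comp S ∧
        ∀ m n m' n' : ℤ,
          ⟪gaborVec U V ξ₀ (m', n'), S (gaborVec U V ξ₀ (m, n))⟫_ℂ = K' (m, n) (m', n')) ∧
    (∀ S : H →L[ℂ] H, IsPositiveOp S →
      S.comp (U : H →L[ℂ] H) = (U : H →L[ℂ] H).comp S →
      S.comp (V : H →L[ℂ] H) = (V : H →L[ℂ] H).comp S →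
      IsPosDefKernel (fun p q : ℤ × ℤ => ⟪gaborVec U V ξ₀ q, S (gaborVec U V ξ₀ p)⟫_ℂ) ∧
      GaborCovariant lam
        (fun p q : ℤ × ℤ => ⟪gaborVec U V ξ₀ q, S (gaborVec U V ξ₀ p)⟫_ℂ)) :=
  gabor_commutant_positive_operators_general lam hlam K U V ξ₀ hsys
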